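/- arXiv:1108.6299 — 2 statements merged into one kernel-verified Lean document; each statement's English description precedes it below -/
import Mathlib

section
/- Let m_n = (n+1/2)c with c > 0, let B_n be the propagator weights, and suppose Lc/2 ≥ log 2. Then the full Casimir sum E(L) = ∑_{n=0}^∞ B_n ∫_0^μ p² log(1 - e^{-L√(p²+m_n²)}) dp converges absolutely and satisfies |E(L)| ≤ C·e^{-Lm_0} for some constant C > 0 depending only on μ and c. -/
open Real

lemma abs_log_one_sub_le_aux (t : ℝ) (h0 : 0 ≤ t) (h1 : t ≤ 1/2) :
    |Real.log (1 - t)| ≤ 2 * t := by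
  have h2 : (0:ℝ) < 1 - t := by linarith
  have h3 : Real.log (1 - t) ≤ 0 := Real.log_nonpos (by linarith) (by linarith)
  rw [abs_of_nonpos h3]
  have h4 : -Real.log (1 - t) = Real.log (1 - t)⁻¹ := (Real.log_inv _).symm
  rw [h4]
  have h5 : Real.log (1 - t)⁻¹ ≤ (1 - t)⁻¹ - 1 :=
    Real.log_le_sub_one_of_pos (by positivity)
  have h6 : (1 - t)⁻¹ ≤ 1 + 2 * t := by
    rw [inv_eq_one_div, div_le_iff₀ h2]; nlinarith
  linarith

/-- The full Casimir sum over the mass spectrum `m_n = (n+1/2)c` converges absolutely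
and is bounded by `C·e^{-L m_0}` with `m_0 = c/2` and `C` depending only on `μ` and `c`. -/
theorem casimir_sum_exponentially_small (K c μ : ℝ) (hK : 0 < K) (hc : 0 < c) (hμ : 0 < μ)
    (B : ℕ → ℝ)
    (hB : ∀ n : ℕ, B n = (2 * (n : ℝ) + 1) * (π ^ 2 / K ^ 2) * (-1 : ℝ) ^ n *
        Real.exp (-((n : ℝ) + 1 / 2) * π) / (1 + Real.exp (-(2 * (n : ℝ) + 1) * π))) :
    ∃ C : ℝ, 0 < C ∧ ∀ L : ℝ, 0 < L → Real.log 2 ≤ L * c / 2 →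
      Summable (fun n : ℕ =>
        |B n * ∫ p in (0:ℝ)..μ, p ^ 2 *
            Real.log (1 - Real.exp (-(L * Real.sqrt (p ^ 2 + (((n : ℝ) + 1 / 2) * c) ^ 2))))|) ∧
      |∑' n : ℕ, B n * ∫ p in (0:ℝ)..μ, p ^ 2 *
            Real.log (1 - Real.exp (-(L * Real.sqrt (p ^ 2 + (((n : ℝ) + 1 / 2) * c) ^ 2))))| ≤
        C * Real.exp (-(L * (c / 2))) := by
  set r : ℝ := Real.exp (-π) with hr
  have hr0 : 0 < r := Real.exp_pos _
  have hr1 : r < 1 := Real.exp_lt_one_iff.mpr (neg_lt_zero.mpr Real.pi_pos)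
  -- bound on |B n|
  have hBle : ∀ n : ℕ, |B n| ≤ π ^ 2 / K ^ 2 * (2 * ((n:ℝ) * r ^ n) + r ^ n) := by
    intro n
    rw [hB n, abs_div, abs_mul, abs_mul, abs_mul]
    have e1 : |(-1 : ℝ) ^ n| = 1 := by
      rw [abs_pow, abs_neg, abs_one, one_pow]
    have e2 : |2 * (n:ℝ) + 1| = 2 * (n:ℝ) + 1 := abs_of_nonneg (by positivity)
    have e3 : |π ^ 2 / K ^ 2| = π ^ 2 / K ^ 2 := abs_of_nonneg (by positivity)
    have e4 : |Real.exp (-((n:ℝ) + 1 / 2) * π)| = Real.exp (-((n:ℝ) + 1 / 2) * π) :=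
      abs_of_nonneg (Real.exp_pos _).le
    have e5 : |1 + Real.exp (-(2 * (n:ℝ) + 1) * π)| = 1 + Real.exp (-(2 * (n:ℝ) + 1) * π) :=
      abs_of_nonneg (by positivity)
    rw [e1, e2, e3, e4, e5, mul_one]
    have hden : (1:ℝ) ≤ 1 + Real.exp (-(2 * (n:ℝ) + 1) * π) := by
      nlinarith [Real.exp_pos (-(2 * (n:ℝ) + 1) * π)]
    have hexpn : Real.exp (-((n:ℝ) + 1 / 2) * π) ≤ r ^ n := by
      rw [hr, ← Real.exp_nat_mul]
      exact Real.exp_le_exp.mpr (by nlinarith [Real.pi_pos])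
    have h1 : (2 * (n:ℝ) + 1) * (π ^ 2 / K ^ 2) * Real.exp (-((n:ℝ) + 1 / 2) * π) /
        (1 + Real.exp (-(2 * (n:ℝ) + 1) * π)) ≤
        (2 * (n:ℝ) + 1) * (π ^ 2 / K ^ 2) * Real.exp (-((n:ℝ) + 1 / 2) * π) := by
      apply div_le_self (by positivity) hden
    have h2 : (2 * (n:ℝ) + 1) * (π ^ 2 / K ^ 2) * Real.exp (-((n:ℝ) + 1 / 2) * π) ≤
        (2 * (n:ℝ) + 1) * (π ^ 2 / K ^ 2) * r ^ n := by
      apply mul_le_mul_of_nonneg_left hexpn (by positivity)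
    calc _ ≤ (2 * (n:ℝ) + 1) * (π ^ 2 / K ^ 2) * r ^ n := le_trans h1 h2
      _ = π ^ 2 / K ^ 2 * (2 * ((n:ℝ) * r ^ n) + r ^ n) := by ring
  have hgsum : Summable (fun n : ℕ => π ^ 2 / K ^ 2 * (2 * ((n:ℝ) * r ^ n) + r ^ n)) := by
    apply Summable.mul_left
    apply Summable.add
    · apply Summable.mul_left
      have := summable_pow_mul_geometric_of_norm_lt_one (R := ℝ) 1
        (r := r) (by rw [Real.norm_eq_abs, abs_of_pos hr0]; exact hr1)
      simpa using this
    · exact summable_geometric_of_lt_one hr0.le hr1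
  have hBsum : Summable (fun n : ℕ => |B n|) :=
    Summable.of_nonneg_of_le (fun n => abs_nonneg _) hBle hgsum
  set S : ℝ := ∑' n : ℕ, |B n| with hS
  have hS0 : 0 ≤ S := tsum_nonneg (fun n => abs_nonneg _)
  refine ⟨2 * μ ^ 3 * S + 1, by positivity, ?_⟩
  intro L hL hLc
  set E : ℝ := Real.exp (-(L * (c / 2))) with hE
  have hE0 : 0 < E := Real.exp_pos _
  -- bound on each integral
  have hint : ∀ n : ℕ, |∫ p in (0:ℝ)..μ, p ^ 2 *
      Real.log (1 - Real.exp (-(L * Real.sqrt (p ^ 2 + (((n:ℝ) + 1 / 2) * c) ^ 2))))| ≤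
      2 * μ ^ 3 * E := by
    intro n
    set m : ℝ := ((n:ℝ) + 1 / 2) * c with hm
    have hm0 : 0 < m := by positivity
    have hbd : ∀ p ∈ Set.uIoc (0:ℝ) μ,
        ‖p ^ 2 * Real.log (1 - Real.exp (-(L * Real.sqrt (p ^ 2 + m ^ 2))))‖ ≤
        2 * μ ^ 2 * E := by
      intro p hp
      rw [Set.uIoc_of_le hμ.le] at hp
      obtain ⟨hp0, hpμ⟩ := hp
      set x : ℝ := L * Real.sqrt (p ^ 2 + m ^ 2) with hx
      have hsq : m ≤ Real.sqrt (p ^ 2 + m ^ 2) := by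
        have h := Real.sqrt_le_sqrt (show m ^ 2 ≤ p ^ 2 + m ^ 2 by nlinarith)
        rwa [Real.sqrt_sq hm0.le] at h
      have hcm : c / 2 ≤ m := by
        have : (0:ℝ) ≤ (n:ℝ) := Nat.cast_nonneg n
        nlinarith
      have hxge : L * (c / 2) ≤ x := by
        calc L * (c / 2) ≤ L * m := by nlinarith
          _ ≤ x := mul_le_mul_of_nonneg_left hsq hL.le
      have hlog2 : Real.log 2 ≤ x := le_trans (by linarith) hxge
      have ht : Real.exp (-x) ≤ 1 / 2 := by
        calc Real.exp (-x) ≤ Real.exp (-(Real.log 2)) :=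
              Real.exp_le_exp.mpr (by linarith)
          _ = 1 / 2 := by
              rw [Real.exp_neg, Real.exp_log two_pos]; norm_num
      have hlog := abs_log_one_sub_le_aux (Real.exp (-x)) (Real.exp_pos _).le ht
      have hexp : Real.exp (-x) ≤ E := Real.exp_le_exp.mpr (by linarith)
      rw [Real.norm_eq_abs, abs_mul, abs_of_nonneg (sq_nonneg p)]
      calc p ^ 2 * |Real.log (1 - Real.exp (-x))| ≤ μ ^ 2 * (2 * E) := by
            apply mul_le_mul (by nlinarith) (le_trans hlog (by linarith))
              (abs_nonneg _) (by positivity)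
        _ = 2 * μ ^ 2 * E := by ring
    have h := intervalIntegral.norm_integral_le_of_norm_le_const hbd
    rw [Real.norm_eq_abs] at h
    calc |∫ p in (0:ℝ)..μ, p ^ 2 *
          Real.log (1 - Real.exp (-(L * Real.sqrt (p ^ 2 + m ^ 2))))| ≤
          2 * μ ^ 2 * E * |μ - 0| := h
      _ = 2 * μ ^ 3 * E := by rw [sub_zero, abs_of_pos hμ]; ring
  have key : ∀ n : ℕ, |B n * ∫ p in (0:ℝ)..μ, p ^ 2 *
      Real.log (1 - Real.exp (-(L * Real.sqrt (p ^ 2 + (((n:ℝ) + 1 / 2) * c) ^ 2))))| ≤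
      |B n| * (2 * μ ^ 3 * E) := by
    intro n
    rw [abs_mul]
    exact mul_le_mul_of_nonneg_left (hint n) (abs_nonneg _)
  have hmaj : Summable (fun n : ℕ => |B n| * (2 * μ ^ 3 * E)) := hBsum.mul_right _
  have hsum1 : Summable (fun n : ℕ => |B n * ∫ p in (0:ℝ)..μ, p ^ 2 *
      Real.log (1 - Real.exp (-(L * Real.sqrt (p ^ 2 + (((n:ℝ) + 1 / 2) * c) ^ 2))))|) :=
    Summable.of_nonneg_of_le (fun n => abs_nonneg _) key hmaj
  refine ⟨hsum1, ?_⟩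
  have h1 : |∑' n : ℕ, B n * ∫ p in (0:ℝ)..μ, p ^ 2 *
      Real.log (1 - Real.exp (-(L * Real.sqrt (p ^ 2 + (((n:ℝ) + 1 / 2) * c) ^ 2))))| ≤
      ∑' n : ℕ, |B n * ∫ p in (0:ℝ)..μ, p ^ 2 *
      Real.log (1 - Real.exp (-(L * Real.sqrt (p ^ 2 + (((n:ℝ) + 1 / 2) * c) ^ 2))))| := by
    have := norm_tsum_le_tsum_norm (f := fun n : ℕ => B n * ∫ p in (0:ℝ)..μ, p ^ 2 *
      Real.log (1 - Real.exp (-(L * Real.sqrt (p ^ 2 + (((n:ℝ) + 1 / 2) * c) ^ 2)))))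
      (by simpa only [Real.norm_eq_abs] using hsum1)
    simpa only [Real.norm_eq_abs] using this
  have h2 : (∑' n : ℕ, |B n * ∫ p in (0:ℝ)..μ, p ^ 2 *
      Real.log (1 - Real.exp (-(L * Real.sqrt (p ^ 2 + (((n:ℝ) + 1 / 2) * c) ^ 2))))|) ≤
      ∑' n : ℕ, |B n| * (2 * μ ^ 3 * E) := Summable.tsum_le_tsum key hsum1 hmaj
  have h3 : (∑' n : ℕ, |B n| * (2 * μ ^ 3 * E)) = S * (2 * μ ^ 3 * E) := tsum_mul_right
  calc _ ≤ ∑' n : ℕ, |B n| * (2 * μ ^ 3 * E) := le_trans h1 h2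
    _ = S * (2 * μ ^ 3 * E) := h3
    _ ≤ (2 * μ ^ 3 * S + 1) * E := by nlinarith
end

section
/- For m > 0 and L > 0 with Lm ≥ 1, the free massive Casimir energy density integrand satisfies: the function p ↦ p² log(1 - e^{-L√(p²+m²)}) is integrable on [0, ∞), and ∫_0^∞ p² |log(1 - e^{-L√(p²+m²)})| dp ≤ C(m) e^{-Lm}·(1 + 1/L + 1/L² + 1/L³) for an explicit constant C(m). -/
/-!
Since `L √(p² + m²) ≥ L m ≥ 1 > log 2`, the number `u = e^{-L√(p²+m²)}` lies in `[0, 1/2]`,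
where `|log (1 - u)| ≤ 2u`. Together with `√(p² + m²) ≥ max m p` this dominates the integrand
by `2 p² e^{-L max(m, p)}`, whose integral over `[0, ∞)` is computed exactly: `e^{-Lm} m³/3`
from `[0, m]` plus `e^{-Lm}(m²/L + 2m/L² + 2/L³)` from `(m, ∞)`, the latter by an explicit
antiderivative.
-/

open Real MeasureTheory Set Filter Topology

lemma abs_log_one_sub_le_two_mul {u : ℝ} (hu₀ : 0 ≤ u) (hu : u ≤ 1 / 2) :
    |log (1 - u)| ≤ 2 * u := by
  have hpos : 0 < 1 - u := by linarith
  rw [abs_of_nonpos (log_nonpos hpos.le (by linarith))]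
  have hlog := one_sub_inv_le_log_of_pos hpos
  have hinv : 1 - (1 - u)⁻¹ = -(u / (1 - u)) := by field_simp; ring
  have hdiv : u / (1 - u) ≤ 2 * u := by
    rw [div_le_iff₀ hpos]
    nlinarith
  linarith

lemma abs_log_one_sub_exp_neg_le {x : ℝ} (hx : log 2 ≤ x) :
    |log (1 - exp (-x))| ≤ 2 * exp (-x) := by
  refine abs_log_one_sub_le_two_mul (exp_pos _).le ?_
  calc exp (-x) ≤ exp (-log 2) := exp_le_exp.mpr (neg_le_neg hx)
    _ = 1 / 2 := by rw [exp_neg, exp_log two_pos, one_div]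

lemma max_le_sqrt_sq_add_sq (p m : ℝ) : max m p ≤ √(p ^ 2 + m ^ 2) :=
  max_le ((le_abs_self m).trans (abs_le_sqrt (by nlinarith)))
    ((le_abs_self p).trans (abs_le_sqrt (by nlinarith)))

section SqMulExpNeg

variable {L : ℝ}

lemma hasDerivAt_sq_mul_exp_neg_antideriv (hL : L ≠ 0) (p : ℝ) :
    HasDerivAt (fun p => -((p ^ 2 / L + 2 * p / L ^ 2 + 2 / L ^ 3) * exp (-(L * p))))
      (p ^ 2 * exp (-(L * p))) p := by
  have hpoly : HasDerivAt (fun p : ℝ => p ^ 2 / L + 2 * p / L ^ 2 + 2 / L ^ 3)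
      (2 * p / L + 2 / L ^ 2) p :=
    ((((hasDerivAt_pow 2 p).div_const L).add
      (((hasDerivAt_id p).const_mul 2).div_const (L ^ 2))).add_const (2 / L ^ 3)).congr_deriv
      (by norm_num)
  have hexp : HasDerivAt (fun p : ℝ => exp (-(L * p))) (-L * exp (-(L * p))) p :=
    (((hasDerivAt_id p).const_mul L).neg.exp).congr_deriv
      (by simp only [id, mul_one, Pi.neg_apply]; ring)
  refine (hpoly.mul hexp).neg.congr_deriv ?_
  field_simp
  ring

lemma tendsto_sq_mul_exp_neg_antideriv (hL : 0 < L) :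
    Tendsto (fun p => -((p ^ 2 / L + 2 * p / L ^ 2 + 2 / L ^ 3) * exp (-(L * p))))
      atTop (𝓝 0) := by
  -- in the variable `q = L p` the antiderivative is `-(q² + 2q + 2) e^{-q} / L³`
  have hq : Tendsto (fun q : ℝ => -(q ^ 2 * exp (-q) + 2 * (q ^ 1 * exp (-q))
      + 2 * exp (-q)) / L ^ 3) atTop (𝓝 0) := by
    simpa using ((((tendsto_pow_mul_exp_neg_atTop_nhds_zero 2).add
      ((tendsto_pow_mul_exp_neg_atTop_nhds_zero 1).const_mul 2)).add
      (tendsto_exp_neg_atTop_nhds_zero.const_mul 2)).neg).div_const (L ^ 3)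
  refine (hq.comp (tendsto_id.const_mul_atTop hL)).congr fun p => ?_
  simp only [Function.comp, id]
  field_simp

lemma integrableOn_Ioi_sq_mul_exp_neg_mul (hL : 0 < L) (m : ℝ) :
    IntegrableOn (fun p => p ^ 2 * exp (-(L * p))) (Ioi m) :=
  integrableOn_Ioi_deriv_of_nonneg' (fun p _ => hasDerivAt_sq_mul_exp_neg_antideriv hL.ne' p)
    (fun p _ => by positivity) (tendsto_sq_mul_exp_neg_antideriv hL)

lemma integral_Ioi_sq_mul_exp_neg_mul (hL : 0 < L) (m : ℝ) :
    ∫ p in Ioi m, p ^ 2 * exp (-(L * p)) =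
      exp (-(L * m)) * (m ^ 2 / L + 2 * m / L ^ 2 + 2 / L ^ 3) := by
  rw [integral_Ioi_of_hasDerivAt_of_nonneg'
    (fun p _ => hasDerivAt_sq_mul_exp_neg_antideriv hL.ne' p)
    (fun p _ => by positivity) (tendsto_sq_mul_exp_neg_antideriv hL)]
  ring

variable {m : ℝ}

lemma integrableOn_Ici_sq_mul_exp_neg_max (hL : 0 < L) (hm : 0 ≤ m) :
    IntegrableOn (fun p => p ^ 2 * exp (-(L * max m p))) (Ici 0) := by
  rw [← Icc_union_Ioi_eq_Ici hm]
  refine (Continuous.integrableOn_Icc (by fun_prop)).union ?_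
  refine (integrableOn_Ioi_sq_mul_exp_neg_mul hL m).congr_fun (fun p hp => ?_) measurableSet_Ioi
  rw [max_eq_right (le_of_lt hp)]

lemma integral_Ici_sq_mul_exp_neg_max (hL : 0 < L) (hm : 0 ≤ m) :
    ∫ p in Ici 0, p ^ 2 * exp (-(L * max m p)) =
      exp (-(L * m)) * (m ^ 3 / 3 + m ^ 2 / L + 2 * m / L ^ 2 + 2 / L ^ 3) := by
  have hint := integrableOn_Ici_sq_mul_exp_neg_max hL hm
  rw [← Icc_union_Ioi_eq_Ici hm] at hint ⊢
  rw [setIntegral_union ((Iic_disjoint_Ioi le_rfl).mono_left Icc_subset_Iic_self) measurableSet_Ioi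
    (hint.mono_set subset_union_left) (hint.mono_set subset_union_right)]
  have hIcc : ∫ p in Icc 0 m, p ^ 2 * exp (-(L * max m p)) = exp (-(L * m)) * (m ^ 3 / 3) := by
    rw [setIntegral_congr_fun measurableSet_Icc (g := fun p => exp (-(L * m)) * p ^ 2)
      fun p hp => by rw [max_eq_left hp.2, mul_comm], integral_const_mul,
      integral_Icc_eq_integral_Ioc, ← intervalIntegral.integral_of_le hm, integral_pow]
    ring
  have hIoi : ∫ p in Ioi m, p ^ 2 * exp (-(L * max m p)) = ∫ p in Ioi m, p ^ 2 * exp (-(L * p)) :=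
    setIntegral_congr_fun measurableSet_Ioi fun p hp => by rw [max_eq_right (le_of_lt hp)]
  rw [hIcc, hIoi, integral_Ioi_sq_mul_exp_neg_mul hL]
  ring

end SqMulExpNeg

lemma sq_mul_abs_log_one_sub_exp_neg_le {L m : ℝ} (hL : 0 < L) (hLm : 1 ≤ L * m) (p : ℝ) :
    p ^ 2 * |log (1 - exp (-(L * √(p ^ 2 + m ^ 2))))| ≤ 2 * (p ^ 2 * exp (-(L * max m p))) := by
  have hmax : L * max m p ≤ L * √(p ^ 2 + m ^ 2) :=
    mul_le_mul_of_nonneg_left (max_le_sqrt_sq_add_sq p m) hL.le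
  have hlog2 : log 2 ≤ L * √(p ^ 2 + m ^ 2) := by
    have := mul_le_mul_of_nonneg_left (le_max_left m p) hL.le
    linarith [log_two_lt_d9]
  calc p ^ 2 * |log (1 - exp (-(L * √(p ^ 2 + m ^ 2))))|
      ≤ p ^ 2 * (2 * exp (-(L * √(p ^ 2 + m ^ 2)))) := by
        gcongr
        exact abs_log_one_sub_exp_neg_le hlog2
    _ ≤ 2 * (p ^ 2 * exp (-(L * max m p))) := by
        have := exp_le_exp.mpr (neg_le_neg hmax)
        nlinarith [sq_nonneg p]

/-- For a massive mode, the uncut-off Casimir integrand `p² log(1 - e^{-L√(p²+m²)})`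
is integrable on `[0,∞)` and its absolute integral decays exponentially in `L`:
`∫_0^∞ p²|log(1-e^{-L√(p²+m²)})| dp ≤ C(m)·e^{-Lm}(1 + 1/L + 1/L² + 1/L³)`. -/
theorem casimir_massive_integrable_and_exponential_decay (m : ℝ) (hm : 0 < m) :
    ∃ C : ℝ, 0 < C ∧ ∀ L : ℝ, 0 < L → 1 ≤ L * m →
      IntegrableOn
        (fun p : ℝ => p ^ 2 * Real.log (1 - Real.exp (-(L * Real.sqrt (p ^ 2 + m ^ 2)))))
        (Set.Ici 0) ∧
      (∫ p in Set.Ici (0:ℝ),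
          p ^ 2 * |Real.log (1 - Real.exp (-(L * Real.sqrt (p ^ 2 + m ^ 2))))|) ≤
        C * Real.exp (-(L * m)) * (1 + 1 / L + 1 / L ^ 2 + 1 / L ^ 3) := by
  refine ⟨2 * (m ^ 3 / 3 + m ^ 2 + 2 * m + 2), by positivity, fun L hL hLm => ?_⟩
  have hdom := (integrableOn_Ici_sq_mul_exp_neg_max hL hm.le).const_mul 2
  have hbound := sq_mul_abs_log_one_sub_exp_neg_le hL hLm
  have hnorm (p : ℝ) : ‖p ^ 2 * log (1 - exp (-(L * √(p ^ 2 + m ^ 2))))‖ =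
      p ^ 2 * |log (1 - exp (-(L * √(p ^ 2 + m ^ 2))))| := by
    rw [norm_mul, norm_pow, Real.norm_eq_abs, Real.norm_eq_abs, sq_abs]
  have hint : IntegrableOn (fun p => p ^ 2 * log (1 - exp (-(L * √(p ^ 2 + m ^ 2))))) (Ici 0) :=
    hdom.mono' (by fun_prop) (ae_of_all _ fun p => (hnorm p).trans_le (hbound p))
  refine ⟨hint, ?_⟩
  have hcoeff : m ^ 3 / 3 + m ^ 2 / L + 2 * m / L ^ 2 + 2 / L ^ 3 ≤
      (m ^ 3 / 3 + m ^ 2 + 2 * m + 2) * (1 + 1 / L + 1 / L ^ 2 + 1 / L ^ 3) := by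
    have : 0 < 1 / L := by positivity
    have : 0 < 1 / L ^ 2 := by positivity
    have : 0 < 1 / L ^ 3 := by positivity
    simp only [div_eq_mul_one_div (m ^ 2), div_eq_mul_one_div (2 * m), div_eq_mul_one_div 2 (L ^ 3)]
    nlinarith [pow_pos hm 2, pow_pos hm 3]
  calc ∫ p in Ici 0, p ^ 2 * |log (1 - exp (-(L * √(p ^ 2 + m ^ 2))))|
      ≤ ∫ p in Ici 0, 2 * (p ^ 2 * exp (-(L * max m p))) :=
        setIntegral_mono (IntegrableOn.congr_fun hint.norm (fun p _ => hnorm p) measurableSet_Ici)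
          hdom hbound
    _ = 2 * exp (-(L * m)) * (m ^ 3 / 3 + m ^ 2 / L + 2 * m / L ^ 2 + 2 / L ^ 3) := by
        rw [integral_const_mul, integral_Ici_sq_mul_exp_neg_max hL hm.le, mul_assoc]
    _ ≤ 2 * exp (-(L * m)) *
          ((m ^ 3 / 3 + m ^ 2 + 2 * m + 2) * (1 + 1 / L + 1 / L ^ 2 + 1 / L ^ 3)) := by
        gcongr
    _ = _ := by ring
end
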